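/- arXiv:math/0203041 — 2 statements merged into one kernel-verified Lean document; each statement's English description precedes it below -/
import Mathlib

section
/- Let n ≤ m, let Λ be a real n×m matrix of rank n, and fix points 0 ≤ t₁ < ⋯ < t_m ≤ 1 and a pair 0 ≤ a < b ≤ 1. If Λ̃ and Λ̃′ are two basic expressions of Λ, then Λ̃ preserves (a,b) if and only if Λ̃′ preserves (a,b). -/
open Set

noncomputable section

/-- Row `i` of the matrix `M` (with columns indexed by the points `pts`) preserves the
pair `(a, b)` if its support is contained either in `]a,b[` or in the complement of
`[a,b]` in `[0,1]`. -/
def RowPreserves {n m : ℕ} (pts : Fin m → ℝ) (M : Matrix (Fin n) (Fin m) ℝ)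
    (a b : ℝ) (i : Fin n) : Prop :=
  (∀ j, M i j ≠ 0 → pts j ∈ Ioo a b) ∨ (∀ j, M i j ≠ 0 → pts j ∈ Icc (0:ℝ) 1 \ Icc a b)

/-- `M` preserves `(a, b)` if every row of `M` does. -/
def MatPreserves {n m : ℕ} (pts : Fin m → ℝ) (M : Matrix (Fin n) (Fin m) ℝ)
    (a b : ℝ) : Prop :=
  ∀ i, RowPreserves pts M a b i

open Classical in
lemma preserves_transfer {n m : ℕ}
    (Λ : Matrix (Fin n) (Fin m) ℝ) (pts : Fin m → ℝ) (a b : ℝ)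
    (φ φ' : Fin n → Fin m)
    (hB : IsUnit (Λ.submatrix id φ).det) (hB' : IsUnit (Λ.submatrix id φ').det)
    (hM : MatPreserves pts ((Λ.submatrix id φ)⁻¹ * Λ) a b) :
    MatPreserves pts ((Λ.submatrix id φ')⁻¹ * Λ) a b := by
  set B : Matrix (Fin n) (Fin n) ℝ := Λ.submatrix id φ with hBdef
  set B' : Matrix (Fin n) (Fin n) ℝ := Λ.submatrix id φ' with hB'def
  set M : Matrix (Fin n) (Fin m) ℝ := B⁻¹ * Λ with hMdef
  set M' : Matrix (Fin n) (Fin m) ℝ := B'⁻¹ * Λ with hM'def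
  set C : Matrix (Fin n) (Fin n) ℝ := B'⁻¹ * B with hCdef
  have hC : IsUnit C.det := by
    rw [hCdef, Matrix.det_mul]
    exact (Matrix.isUnit_nonsing_inv_det B' hB').mul hB
  have hBM : B * M = Λ := by
    rw [hMdef, ← Matrix.mul_assoc, Matrix.mul_nonsing_inv _ hB, Matrix.one_mul]
  have hCM : M' = C * M := by
    rw [hM'def, hCdef, Matrix.mul_assoc, hBM]
  have hMC : M = C⁻¹ * M' := by
    rw [hCM, ← Matrix.mul_assoc, Matrix.nonsing_inv_mul _ hC, Matrix.one_mul]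
  -- identity structure of M' at the columns φ'
  have hI : ∀ p l, M' p (φ' l) = if p = l then (1:ℝ) else 0 := by
    intro p l
    have h1 : M' p (φ' l) = (B'⁻¹ * B') p l := by
      rw [hM'def, Matrix.mul_apply, Matrix.mul_apply]
      exact Finset.sum_congr rfl fun k _ => rfl
    rw [h1, Matrix.nonsing_inv_mul _ hB', Matrix.one_apply]
  intro i
  -- split row i of M' into the "inner" part u and "outer" part w
  set S : Fin n → Prop := fun k => ∀ j, M k j ≠ 0 → pts j ∈ Ioo a b with hSdef
  set u : Fin m → ℝ := fun j => ∑ k, if S k then C i k * M k j else 0 with hudef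
  set w : Fin m → ℝ := fun j => ∑ k, if S k then 0 else C i k * M k j with hwdef
  have huw : ∀ j, u j + w j = M' i j := by
    intro j
    rw [hudef, hwdef, hCM]
    simp only [Matrix.mul_apply, ← Finset.sum_add_distrib]
    refine Finset.sum_congr rfl fun k _ => ?_
    split <;> ring
  have huS : ∀ j, u j ≠ 0 → pts j ∈ Ioo a b := by
    intro j hj
    obtain ⟨k, -, hk⟩ := Finset.exists_ne_zero_of_sum_ne_zero hj
    by_cases hSk : S k
    · rw [if_pos hSk] at hk
      exact hSk j fun h0 => hk (by rw [h0, mul_zero])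
    · rw [if_neg hSk] at hk; exact absurd rfl hk
  have hwT : ∀ j, w j ≠ 0 → pts j ∈ Icc (0:ℝ) 1 \ Icc a b := by
    intro j hj
    obtain ⟨k, -, hk⟩ := Finset.exists_ne_zero_of_sum_ne_zero hj
    by_cases hSk : S k
    · rw [if_pos hSk] at hk; exact absurd rfl hk
    · rw [if_neg hSk] at hk
      have hMk : (∀ j, M k j ≠ 0 → pts j ∈ Icc (0:ℝ) 1 \ Icc a b) :=
        (hM k).resolve_left hSk
      exact hMk j fun h0 => hk (by rw [h0, mul_zero])
  -- u is a combination of the rows of M'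
  set c : Fin n → ℝ := fun p => ∑ k, (if S k then C i k else 0) * C⁻¹ k p with hcdef
  have hrep : ∀ j, u j = ∑ p, c p * M' p j := by
    intro j
    have hMkj : ∀ k, M k j = ∑ p, C⁻¹ k p * M' p j := by
      intro k; rw [hMC]; rfl
    calc u j = ∑ k, (if S k then C i k else 0) * M k j := by
          rw [hudef]
          exact Finset.sum_congr rfl fun k _ => by split <;> simp
      _ = ∑ k, ∑ p, (if S k then C i k else 0) * (C⁻¹ k p * M' p j) := by
          refine Finset.sum_congr rfl fun k _ => ?_
          rw [hMkj k, Finset.mul_sum]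
      _ = ∑ p, c p * M' p j := by
          rw [Finset.sum_comm, hcdef]
          refine Finset.sum_congr rfl fun p _ => ?_
          rw [Finset.sum_mul]
          exact Finset.sum_congr rfl fun k _ => by ring
  have hcl : ∀ l, u (φ' l) = c l := by
    intro l
    rw [hrep]
    simp [hI, mul_ite, mul_one, mul_zero]
  -- the coefficients c vanish off the diagonal
  have hc0 : ∀ l, l ≠ i → c l = 0 := by
    intro l hl
    by_contra hcl0
    have h1 : pts (φ' l) ∈ Ioo a b := huS _ (by rw [hcl]; exact hcl0)
    have hwl : w (φ' l) = -c l := by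
      have := huw (φ' l)
      rw [hcl, hI i l, if_neg (fun h => hl h.symm)] at this
      linarith
    have h2 : pts (φ' l) ∈ Icc (0:ℝ) 1 \ Icc a b :=
      hwT _ (by rw [hwl]; exact neg_ne_zero.mpr hcl0)
    exact h2.2 ⟨le_of_lt h1.1, le_of_lt h1.2⟩
  have husum : ∀ j, u j = c i * M' i j := by
    intro j
    rw [hrep]
    exact Finset.sum_eq_single_of_mem i (Finset.mem_univ i)
      (fun p _ hp => by rw [hc0 p hp, zero_mul])
  by_cases hci : c i = 0
  · refine Or.inr fun j hj => hwT j ?_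
    have : u j = 0 := by rw [husum, hci, zero_mul]
    have := huw j
    intro hw0
    rw [‹u j = 0›, hw0, add_zero] at this
    exact hj this.symm
  · refine Or.inl fun j hj => huS j ?_
    rw [husum]
    exact mul_ne_zero hci hj

theorem preserves_independent_of_basic_expression
    {n m : ℕ} (hnm : n ≤ m)
    (Λ : Matrix (Fin n) (Fin m) ℝ) (hrank : Λ.rank = n)
    (pts : Fin m → ℝ) (hmono : StrictMono pts) (hpts : ∀ j, pts j ∈ Icc (0:ℝ) 1)
    (a b : ℝ) (ha : 0 ≤ a) (hab : a < b) (hb : b ≤ 1)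
    -- two bases (column selections) of Λ
    (φ φ' : Fin n → Fin m) (hφ : Function.Injective φ) (hφ' : Function.Injective φ')
    (hBinv : IsUnit (Λ.submatrix id φ).det) (hB'inv : IsUnit (Λ.submatrix id φ').det) :
    (MatPreserves pts ((Λ.submatrix id φ)⁻¹ * Λ) a b ↔
      MatPreserves pts ((Λ.submatrix id φ')⁻¹ * Λ) a b) := by
  constructor
  · exact preserves_transfer Λ pts a b φ φ' hBinv hB'inv
  · exact preserves_transfer Λ pts a b φ' φ hB'inv hBinv
end
end

section
/- Let W = {W(t), t ∈ [0,1]} be a standard Wiener process and define X(t) = W(t) − (1/2)(W(1/2) + W(1)) for t ∈ [0,1] (so that X is the solution of Ẋ = Ẇ with the lateral condition X(1/2) + X(1) = 0). Then X is not a Markov field; specifically, the σ-fields σ(X(1/2)) and σ(X(1)) are not conditionally independent given σ(X(0), X(2/3)). -/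
/-!
Since `X 1 = -X (1/2)`, conditional independence of `σ(X(1/2))` and `σ(X(1))` given
`G = σ(X(0), X(2/3))` would make `A = {X(1/2) ≤ 0}` conditionally independent of itself, so
`P(A | G)` would be `{0, 1}`-valued and `A` would agree a.s. with an event
`{(X(0), X(2/3)) ∈ M}`. But `(X(1/2), X(0), X(2/3))` is the image under a linear bijection of
three independent non-degenerate Gaussian increments of `W`, so its law dominates Lebesgue
measure on `ℝ³`, under which the sign of the first coordinate is not a.e. a function of the
other two.
-/

open MeasureTheory Set

noncomputable section

/-- Two sub-σ-fields `F₁`, `F₂` are conditionally independent given `G` (under `P`) if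
`P(A ∩ B | G) = P(A | G) · P(B | G)` a.s. for all `A ∈ F₁`, `B ∈ F₂`. -/
def CondIndepSigma {Ω : Type*} {mΩ : MeasurableSpace Ω} (P : Measure Ω)
    (G F₁ F₂ : MeasurableSpace Ω) : Prop :=
  ∀ A B : Set Ω, MeasurableSet[F₁] A → MeasurableSet[F₂] B →
    P[(A ∩ B).indicator (fun _ => (1 : ℝ)) | G] =ᵐ[P]
      P[A.indicator (fun _ => (1 : ℝ)) | G] * P[B.indicator (fun _ => (1 : ℝ)) | G]

/-- A standard Wiener process on `[0,1]`: continuous paths, `W 0 = 0`, Gaussian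
increments of the right variance, independent increments. -/
structure IsWienerProcess {Ω : Type*} [MeasurableSpace Ω] (P : Measure Ω)
    (W : ℝ → Ω → ℝ) : Prop where
  measurable : ∀ t, Measurable (W t)
  continuous_paths : ∀ ω, ContinuousOn (fun t => W t ω) (Icc 0 1)
  start_zero : ∀ ω, W 0 ω = 0
  gaussian_increments : ∀ s t : ℝ, 0 ≤ s → s ≤ t → t ≤ 1 →
    P.map (fun ω => W t ω - W s ω) =
      ProbabilityTheory.gaussianReal 0 (Real.toNNReal (t - s))
  indep_increments : ∀ (k : ℕ) (t : Fin (k + 1) → ℝ), Monotone t →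
    (∀ i, t i ∈ Icc (0:ℝ) 1) →
    ProbabilityTheory.iIndepFun
      (fun i : Fin k => fun ω => W (t i.succ) ω - W (t i.castSucc) ω) P

/-- The companion matrix `A(t)` of the differential operator: first row given by the
coefficient functions, `-1` on the subdiagonal, `0` elsewhere. -/
def companion {n : ℕ} (coef : Fin n → ℝ → ℝ) (t : ℝ) : Matrix (Fin n) (Fin n) ℝ :=
  fun i j => if i.val = 0 then coef j t else if i.val = j.val + 1 then -1 else 0

section CondExpIndicator

variable {Ω : Type*} {m mΩ : MeasurableSpace Ω} {μ : Measure Ω} [IsFiniteMeasure μ] {A C : Set Ω}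

theorem measureReal_inter_eq_of_condExp_indicator_ae_eq (hm : m ≤ mΩ) (hA : MeasurableSet A)
    (hC : MeasurableSet[m] C) {c : ℝ}
    (h : ∀ᵐ ω ∂μ, ω ∈ C → μ[A.indicator (fun _ => (1 : ℝ)) | m] ω = c) :
    μ.real (C ∩ A) = c * μ.real C := by
  calc μ.real (C ∩ A) = ∫ ω in C, A.indicator (fun _ => (1 : ℝ)) ω ∂μ := by
        rw [setIntegral_indicator hA, setIntegral_const, smul_eq_mul, mul_one]
    _ = ∫ ω in C, μ[A.indicator (fun _ => (1 : ℝ)) | m] ω ∂μ :=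
        (setIntegral_condExp hm ((integrable_const 1).indicator hA) hC).symm
    _ = ∫ _ in C, c ∂μ := setIntegral_congr_ae (hm C hC) h
    _ = c * μ.real C := by rw [setIntegral_const, smul_eq_mul, mul_comm]

theorem exists_measurableSet_ae_eq_of_condExp_indicator_eq_mul_self (hm : m ≤ mΩ)
    (hA : MeasurableSet A)
    (h : μ[A.indicator (fun _ => (1 : ℝ)) | m] =ᵐ[μ]
      μ[A.indicator (fun _ => (1 : ℝ)) | m] * μ[A.indicator (fun _ => (1 : ℝ)) | m]) :
    ∃ C, MeasurableSet[m] C ∧ A =ᵐ[μ] C := by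
  set f := μ[A.indicator (fun _ => (1 : ℝ)) | m]
  have hC : MeasurableSet[m] (f ⁻¹' {1}) :=
    stronglyMeasurable_condExp.measurable (measurableSet_singleton 1)
  have h01 : ∀ᵐ ω ∂μ, f ω = 0 ∨ f ω = 1 := by
    filter_upwards [h] with ω hω
    have : f ω * (f ω - 1) = 0 := by simp only [Pi.mul_apply] at hω; linarith
    simpa [sub_eq_zero] using this
  have hout := measureReal_inter_eq_of_condExp_indicator_ae_eq (μ := μ) (c := 0) hm hA hC.compl
    (by filter_upwards [h01] with ω hω hωC using hω.resolve_right hωC)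
  have hin := measureReal_inter_eq_of_condExp_indicator_ae_eq (μ := μ) (c := 1) hm hA hC
    (Filter.Eventually.of_forall fun ω hω => hω)
  refine ⟨_, hC, ae_eq_set.2 ⟨?_, ?_⟩⟩
  · rw [← measureReal_eq_zero_iff, sdiff_eq_compl_inter, hout, zero_mul]
  · have := measureReal_inter_add_sdiff (μ := μ) (s := f ⁻¹' {1}) hA
    rw [← measureReal_eq_zero_iff]
    linarith

end CondExpIndicator

namespace CondIndepSigma

variable {Ω : Type*} {mΩ : MeasurableSpace Ω} {P : Measure Ω}
  {G F₁ F₂ F₁' F₂' : MeasurableSpace Ω}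

theorem mono (h : CondIndepSigma P G F₁ F₂) (h₁ : F₁' ≤ F₁) (h₂ : F₂' ≤ F₂) :
    CondIndepSigma P G F₁' F₂' :=
  fun A B hA hB => h A B (h₁ A hA) (h₂ B hB)

theorem exists_measurableSet_ae_eq [IsFiniteMeasure P] (h : CondIndepSigma P G F₁ F₂)
    (hG : G ≤ mΩ) {A : Set Ω} (hA : MeasurableSet[mΩ] A) (hA₁ : MeasurableSet[F₁] A)
    (hA₂ : MeasurableSet[F₂] A) :
    ∃ C, MeasurableSet[G] C ∧ A =ᵐ[P] C := by
  have := h A A hA₁ hA₂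
  rw [inter_self] at this
  exact exists_measurableSet_ae_eq_of_condExp_indicator_eq_mul_self hG hA this

end CondIndepSigma

theorem volume_setOf_not_nonpos_iff_mem_ne_zero {β : Type*} [MeasureSpace β]
    [SigmaFinite (volume : Measure β)] [NeZero (volume : Measure β)] (M : Set β) :
    volume {p : ℝ × β | ¬(p.1 ≤ 0 ↔ p.2 ∈ M)} ≠ 0 := by
  have hM : volume M ≠ 0 ∨ volume Mᶜ ≠ 0 := by
    by_contra! h
    exact NeZero.ne (volume : Measure β) (Measure.measure_univ_eq_zero.1 <| by
      rw [← union_compl_self M]; exact measure_union_null h.1 h.2)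
  rw [Measure.volume_eq_prod]
  rcases hM with hM | hM
  · have hsub : Ioi 0 ×ˢ M ⊆ {p : ℝ × β | ¬(p.1 ≤ 0 ↔ p.2 ∈ M)} := fun p hp => by
      simp_all [not_le.2 (mem_Ioi.1 hp.1)]
    exact fun h0 => hM (by simpa [Measure.prod_prod] using measure_mono_null hsub h0)
  · have hsub : Iic 0 ×ˢ Mᶜ ⊆ {p : ℝ × β | ¬(p.1 ≤ 0 ↔ p.2 ∈ M)} := fun p hp => by
      simp_all
    exact fun h0 => hM (by simpa [Measure.prod_prod] using measure_mono_null hsub h0)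

theorem not_ae_eq_preimage_of_absolutelyContinuous_map {Ω β : Type*} {mΩ : MeasurableSpace Ω}
    {P : Measure Ω} [MeasureSpace β] [SigmaFinite (volume : Measure β)]
    [NeZero (volume : Measure β)] {ξ : Ω → ℝ} {η : Ω → β}
    (hξη : AEMeasurable (fun ω => (ξ ω, η ω)) P)
    (h : volume ≪ P.map (fun ω => (ξ ω, η ω))) {M : Set β} (hM : MeasurableSet M) :
    ¬ ξ ⁻¹' Iic 0 =ᵐ[P] η ⁻¹' M := by
  intro hae
  refine volume_setOf_not_nonpos_iff_mem_ne_zero M (h ?_)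
  rw [Measure.map_apply_of_aemeasurable hξη]
  · exact ae_iff.1 hae.mem_iff
  · exact ((measurableSet_le measurable_fst measurable_const).iff
      (hM.preimage measurable_snd)).compl

theorem absolutelyContinuous_map_linearEquiv_of_addHaar {E : Type*} [NormedAddCommGroup E]
    [NormedSpace ℝ E] [MeasurableSpace E] [BorelSpace E] [FiniteDimensional ℝ E]
    {μ ν : Measure E} [μ.IsAddHaarMeasure] (h : μ ≪ ν) (L : E ≃ₗ[ℝ] E) : μ ≪ ν.map L := by
  have hdet : LinearMap.det (L : E →ₗ[ℝ] E) ≠ 0 := L.isUnit_det'.ne_zero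
  have hmap := Measure.map_linearMap_addHaar_eq_smul_addHaar μ hdet
  refine (Measure.absolutelyContinuous_smul ?_).trans (hmap ▸ h.map ?_)
  · simpa using hdet
  · exact (L : E →ₗ[ℝ] E).continuous_of_finiteDimensional.measurable

open ProbabilityTheory in
theorem IsWienerProcess.volume_absolutelyContinuous_map_increments {Ω : Type*}
    {mΩ : MeasurableSpace Ω} {P : Measure Ω} [IsFiniteMeasure P] {W : ℝ → Ω → ℝ}
    (hW : IsWienerProcess P W) {t₀ t₁ t₂ t₃ : ℝ} (h₀ : 0 ≤ t₀) (h₁ : t₀ < t₁) (h₂ : t₁ < t₂)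
    (h₃ : t₂ < t₃) (h₄ : t₃ ≤ 1) :
    volume ≪ P.map (fun ω => (W t₁ ω - W t₀ ω, W t₂ ω - W t₁ ω, W t₃ ω - W t₂ ω)) := by
  let t : Fin 4 → ℝ := ![t₀, t₁, t₂, t₃]
  have ht : Monotone t := by
    rw [Fin.monotone_iff_le_succ]
    intro i
    fin_cases i
    exacts [h₁.le, h₂.le, h₃.le]
  have hind := hW.indep_increments 3 t ht fun i =>
    ⟨h₀.trans (ht (Fin.zero_le i)), (ht (Fin.le_last i)).trans h₄⟩
  have hmeas : ∀ s u, Measurable fun ω => W u ω - W s ω :=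
    fun s u => (hW.measurable u).sub (hW.measurable s)
  have hVZ : IndepFun (fun ω => W t₂ ω - W t₁ ω) (fun ω => W t₃ ω - W t₂ ω) P :=
    hind.indepFun (i := 1) (j := 2) (by decide)
  have hUVZ : IndepFun (fun ω => W t₁ ω - W t₀ ω)
      (fun ω => (W t₂ ω - W t₁ ω, W t₃ ω - W t₂ ω)) P :=
    (hind.indepFun_prodMk (fun _ => hmeas _ _) 1 2 0 (by decide) (by decide)).symm
  have hvar : ∀ {s u : ℝ}, s < u → (u - s).toNNReal ≠ 0 := fun h => by simpa using h
  rw [(indepFun_iff_map_prod_eq_prod_map_map (hmeas _ _).aemeasurable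
      ((hmeas _ _).prodMk (hmeas _ _)).aemeasurable).1 hUVZ,
    (indepFun_iff_map_prod_eq_prod_map_map (hmeas _ _).aemeasurable
      (hmeas _ _).aemeasurable).1 hVZ,
    hW.gaussian_increments _ _ h₀ h₁.le (by linarith),
    hW.gaussian_increments _ _ (by linarith) h₂.le (by linarith),
    hW.gaussian_increments _ _ (by linarith) h₃.le h₄, Measure.volume_eq_prod,
    Measure.volume_eq_prod]
  exact (gaussianReal_absolutelyContinuous' 0 (hvar h₁)).prod
    ((gaussianReal_absolutelyContinuous' 0 (hvar h₂)).prod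
      (gaussianReal_absolutelyContinuous' 0 (hvar h₃)))

/-- The increments of `W` over `[0, 1/2]`, `[1/2, 2/3]`, `[2/3, 1]` determine
`(X (1/2), X 0, X (2/3))` through this map. -/
def incrementsToValues : (ℝ × ℝ × ℝ) ≃ₗ[ℝ] ℝ × ℝ × ℝ where
  toFun p := (-(p.2.1 + p.2.2) / 2, -p.1 - (p.2.1 + p.2.2) / 2, (p.2.1 - p.2.2) / 2)
  invFun q := (q.1 - q.2.1, q.2.2 - q.1, -q.1 - q.2.2)
  map_add' p q := by ext <;> simp only [Prod.fst_add, Prod.snd_add] <;> ring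
  map_smul' c p := by
    ext <;> simp only [Prod.smul_fst, Prod.smul_snd, smul_eq_mul, RingHom.id_apply] <;> ring
  left_inv p := by ext <;> dsimp only <;> ring
  right_inv q := by ext <;> dsimp only <;> ring

theorem volume_absolutelyContinuous_map_values {Ω : Type*} {mΩ : MeasurableSpace Ω}
    {P : Measure Ω} [IsFiniteMeasure P] {W X : ℝ → Ω → ℝ} (hW : IsWienerProcess P W)
    (hX : ∀ t ω, X t ω = W t ω - (W (1/2) ω + W 1 ω) / 2) :
    volume ≪ P.map (fun ω => (X (1/2) ω, X 0 ω, X (2/3) ω)) := by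
  have hvalues : (fun ω => (X (1/2) ω, X 0 ω, X (2/3) ω)) = incrementsToValues ∘
      (fun ω => (W (1/2) ω - W 0 ω, W (2/3) ω - W (1/2) ω, W 1 ω - W (2/3) ω)) := by
    funext ω
    simp only [Function.comp_apply, incrementsToValues, LinearEquiv.coe_mk, LinearMap.coe_mk,
      AddHom.coe_mk, hX, Prod.mk.injEq]
    refine ⟨?_, ?_, ?_⟩ <;> ring
  have hWm := hW.measurable
  have hL : Measurable incrementsToValues :=
    incrementsToValues.toContinuousLinearEquiv.continuous.measurable
  -- instance search does not find this for the nested product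
  have : (volume : Measure (ℝ × ℝ × ℝ)).IsAddHaarMeasure :=
    Measure.prod.instIsAddHaarMeasure _ _
  rw [hvalues, ← Measure.map_map hL (by fun_prop)]
  exact absolutelyContinuous_map_linearEquiv_of_addHaar
    (hW.volume_absolutelyContinuous_map_increments le_rfl (by norm_num) (by norm_num)
      (by norm_num) le_rfl) _

theorem not_markov_field_example
    {Ω : Type*} {mΩ : MeasurableSpace Ω} (P : Measure Ω) [IsProbabilityMeasure P]
    (W : ℝ → Ω → ℝ) (hW : IsWienerProcess P W)
    (X : ℝ → Ω → ℝ)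
    (hX : ∀ t ω, X t ω = W t ω - (W (1/2) ω + W 1 ω) / 2) :
    -- X is not a Markov field ...
    (¬ ∀ a b : ℝ, 0 ≤ a → a < b → b ≤ 1 →
      CondIndepSigma P
        (MeasurableSpace.comap (fun ω => (X a ω, X b ω)) inferInstance)
        (⨆ t ∈ Icc a b, MeasurableSpace.comap (X t) inferInstance)
        (⨆ t ∈ Icc (0:ℝ) 1 \ Ioo a b, MeasurableSpace.comap (X t) inferInstance)) ∧
    -- ... specifically, σ(X(1/2)) and σ(X(1)) are not conditionally independent
    -- given σ(X(0), X(2/3))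
    ¬ CondIndepSigma P
        (MeasurableSpace.comap (fun ω => (X 0 ω, X (2/3) ω)) inferInstance)
        (MeasurableSpace.comap (X (1/2)) inferInstance)
        (MeasurableSpace.comap (X 1) inferInstance) := by
  have hXm : ∀ t, Measurable (X t) := fun t => by
    have := hW.measurable
    rw [funext (hX t)]; fun_prop
  have hnot : ¬ CondIndepSigma P
      (MeasurableSpace.comap (fun ω => (X 0 ω, X (2/3) ω)) inferInstance)
      (MeasurableSpace.comap (X (1/2)) inferInstance)
      (MeasurableSpace.comap (X 1) inferInstance) := by
    intro hCI
    -- `X 1 = -X (1/2)`, so `{X (1/2) ≤ 0}` lies in both σ-fields.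
    have hA₂ : X 1 ⁻¹' Ici 0 = X (1/2) ⁻¹' Iic 0 := by
      ext ω; simp only [mem_preimage, mem_Ici, mem_Iic, hX]; constructor <;> intro <;> linarith
    obtain ⟨_, ⟨M, hM, rfl⟩, hAC⟩ := hCI.exists_measurableSet_ae_eq
      ((hXm 0).prodMk (hXm _)).comap_le (hXm _ measurableSet_Iic)
      ⟨Iic 0, measurableSet_Iic, rfl⟩ ⟨Ici 0, measurableSet_Ici, hA₂⟩
    exact not_ae_eq_preimage_of_absolutelyContinuous_map (by fun_prop)
      (volume_absolutelyContinuous_map_values hW hX) hM hAC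
  refine ⟨fun hMarkov => hnot ((hMarkov 0 (2/3) le_rfl (by norm_num) (by norm_num)).mono ?_ ?_),
    hnot⟩
  · exact le_iSup₂_of_le (f := fun t (_ : t ∈ Icc (0:ℝ) (2/3)) =>
      MeasurableSpace.comap (X t) inferInstance) (1/2) (by norm_num) le_rfl
  · exact le_iSup₂_of_le (f := fun t (_ : t ∈ Icc (0:ℝ) 1 \ Ioo 0 (2/3)) =>
      MeasurableSpace.comap (X t) inferInstance) 1 (by norm_num) le_rfl
end
end
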